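/- arXiv:2406.03569 — 4 statements merged into one kernel-verified Lean document; each statement's English description precedes it below -/
import Mathlib

section
/- (Super- /sub-resolution error bound for GFN-ROM) Suppose: (i) for all i ∈ M_o and j ∈ M_n with i ← j or i → j, |u(x_i) − u(x_j)| ≤ δ; and (ii) for all i ∈ M_o, |u(x_i) − d_i| ≤ τ, where d ∈ ℝ^{N_o} is the decoder output on M_o (d_k = Σ_j W^d_{k j} z_j + b^d_k with z = map(μ)). Then for all i ∈ M_n, |u(x_i) − d̃_i| ≤ τ + δ, where d̃_i = Σ_j W̃^d_{i j} z_j + b̃^d_i with W̃^d_{i j} = mean_{k: k↮ i} W^d_{k j} and b̃^d_i = mean_{k: k↮ i} b^d_k. -/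
/-!
For `k ↮ i`, the triangle inequality through `u k` gives `|u i - d k| ≤ δ + τ`. The decoder is
affine in its weights and bias, so averaging `W^d` and `b^d` over `{k | k ↮ i}` averages the
outputs `d k`, and an average of values within `τ + δ` of `u i` stays within `τ + δ` of `u i`.
The averaging set is nonempty since it contains the nearest neighbour of `i` in `M_o`.
-/

open Finset
open scoped Classical

/-- `k` is the unique nearest neighbour of `x` among the points of the mesh `M`. -/
def IsNN {X : Type*} [MetricSpace X] (M : Finset X) (x k : X) : Prop :=
  k ∈ M ∧ ∀ m ∈ M, m ≠ k → dist x k < dist x m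

theorem sum_div_card_mul_add_sum_div_card {ι κ : Type*} [Fintype κ] (S : Finset ι)
    (W : ι → κ → ℝ) (b : ι → ℝ) (z : κ → ℝ) :
    ∑ l, (∑ k ∈ S, W k l) / #S * z l + (∑ k ∈ S, b k) / #S
      = (∑ k ∈ S, (∑ l, W k l * z l + b k)) / #S := by
  rw [sum_add_distrib, add_div, sum_div, sum_div]
  simp only [div_mul_eq_mul_div, sum_mul, sum_div]
  rw [sum_comm]

theorem abs_sub_sum_div_card_le {ι : Type*} {S : Finset ι} (hS : S.Nonempty) {f : ι → ℝ}
    {a ε : ℝ} (h : ∀ k ∈ S, |a - f k| ≤ ε) :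
    |a - (∑ k ∈ S, f k) / #S| ≤ ε := by
  have hcard : (0 : ℝ) < #S := by exact_mod_cast hS.card_pos
  have hsplit : a - (∑ k ∈ S, f k) / #S = (∑ k ∈ S, (a - f k)) / #S := by
    rw [sum_sub_distrib, sum_const, nsmul_eq_mul, sub_div, mul_div_cancel_left₀ _ hcard.ne']
  rw [hsplit, abs_div, abs_of_pos hcard, div_le_iff₀ hcard]
  calc |∑ k ∈ S, (a - f k)| ≤ ∑ k ∈ S, |a - f k| := abs_sum_le_sum_abs _ _
    _ ≤ #S • ε := sum_le_card_nsmul _ _ _ h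
    _ = ε * #S := by rw [nsmul_eq_mul, mul_comm]

theorem gfn_rom_error_bound_general {X : Type*} [MetricSpace X] (Mo Mn : Finset X)
    (nnO nnN : X → X)
    (hO : ∀ j ∈ Mn, IsNN Mo j (nnO j))
    {L : ℕ} (Wd : X → Fin L → ℝ) (bd : X → ℝ) (z : Fin L → ℝ)
    (u : X → ℝ) (δ τ : ℝ)
    (hcross : ∀ i ∈ Mo, ∀ j ∈ Mn, (nnO j = i ∨ nnN i = j) → |u i - u j| ≤ δ)
    (hdec : ∀ k ∈ Mo, |u k - (∑ l : Fin L, Wd k l * z l + bd k)| ≤ τ) :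
    ∀ i ∈ Mn,
      |u i - (∑ l : Fin L,
          ((∑ k ∈ Mo.filter (fun k => nnO i = k ∨ nnN k = i), Wd k l) /
            ((Mo.filter (fun k => nnO i = k ∨ nnN k = i)).card : ℝ)) * z l
        + (∑ k ∈ Mo.filter (fun k => nnO i = k ∨ nnN k = i), bd k) /
            ((Mo.filter (fun k => nnO i = k ∨ nnN k = i)).card : ℝ))| ≤ τ + δ := by
  intro i hi
  have hne : (Mo.filter (fun k => nnO i = k ∨ nnN k = i)).Nonempty :=
    ⟨nnO i, mem_filter.mpr ⟨(hO i hi).1, Or.inl rfl⟩⟩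
  rw [sum_div_card_mul_add_sum_div_card]
  refine abs_sub_sum_div_card_le hne fun k hk => ?_
  obtain ⟨hkMo, hki⟩ := mem_filter.mp hk
  have hcross_ki := hcross k hkMo i hi hki
  rw [abs_sub_comm] at hcross_ki
  linarith [abs_sub_le (u i) (u k) (∑ l, Wd k l * z l + bd k), hdec k hkMo]

/-- Super- and sub-resolution error bound for GFN-ROM: if nearest-neighbour pairs of
nodes have solution values within `δ` and the decoder is `τ`-accurate on `Mo`,
then the GFN-transformed decoder is `(τ + δ)`-accurate on `Mn`. -/
theorem gfn_rom_error_bound {X : Type*} [MetricSpace X] (Mo Mn : Finset X)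
    (nnO nnN : X → X)
    (hO : ∀ j ∈ Mn, IsNN Mo j (nnO j))
    (hN : ∀ i ∈ Mo, IsNN Mn i (nnN i))
    {L : ℕ} (Wd : X → Fin L → ℝ) (bd : X → ℝ) (z : Fin L → ℝ)
    (u : X → ℝ) (δ τ : ℝ) (hδ : 0 ≤ δ) (hτ : 0 ≤ τ)
    (hcross : ∀ i ∈ Mo, ∀ j ∈ Mn, (nnO j = i ∨ nnN i = j) → |u i - u j| ≤ δ)
    (hdec : ∀ k ∈ Mo, |u k - (∑ l : Fin L, Wd k l * z l + bd k)| ≤ τ) :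
    ∀ i ∈ Mn,
      |u i - (∑ l : Fin L,
          ((∑ k ∈ Mo.filter (fun k => nnO i = k ∨ nnN k = i), Wd k l) /
            ((Mo.filter (fun k => nnO i = k ∨ nnN k = i)).card : ℝ)) * z l
        + (∑ k ∈ Mo.filter (fun k => nnO i = k ∨ nnN k = i), bd k) /
            ((Mo.filter (fun k => nnO i = k ∨ nnN k = i)).card : ℝ))| ≤ τ + δ :=
  gfn_rom_error_bound_general Mo Mn nnO nnN hO Wd bd z u δ τ hcross hdec
end

section
/- (Encoder perturbation bound) Let σ: ℝ → ℝ be C-Lipschitz. Suppose |u(x_i) − u(x_j)| ≤ δ whenever i ∈ M_o and j ∈ M_n with i ← j or i → j. Define the original encoder output e_i = σ( Σ_{j∈M_o} W^e_{i j} u(x_j) + b^e_i ) and the transformed encoder output ẽ_i = σ( Σ_{k∈M_n} W̃^e_{i k} u(x_k) + b^e_i ), where W̃^e_{i k} = Σ_{m ∈ M_o : m ↮ k} W^e_{i m} / |{h ∈ M_n : m ↮ h}|. Then for every output index i, |e_i − ẽ_i| ≤ δ C Σ_{j∈M_o} |W^e_{i j}|. -/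
/-!
Swapping the order of summation shows that the transformed encoder feeds `σ` the
pre-activation `Σ_m W^e_{im} ū_m + b^e_i`, where `ū_m` is the mean of `u` over the new-mesh
neighbours of `m`. That set is nonempty (it contains `m`'s nearest neighbour), so `ū_m` lies
within `δ` of `u(x_m)`; the two pre-activations therefore differ by at most
`δ Σ_m |W^e_{im}|`, and the Lipschitz bound on `σ` finishes.
-/

open Finset
open scoped Classical

open scoped BigOperators

theorem abs_sub_expect_le {ι α : Type*} [Field α] [LinearOrder α] [IsStrictOrderedRing α]
    {s : Finset ι} (hs : s.Nonempty) {f : ι → α} {a δ : α} (h : ∀ i ∈ s, |a - f i| ≤ δ) :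
    |a - 𝔼 i ∈ s, f i| ≤ δ :=
  calc |a - 𝔼 i ∈ s, f i| = |𝔼 i ∈ s, (a - f i)| := by
        rw [expect_sub_distrib, expect_const hs]
    _ ≤ 𝔼 i ∈ s, |a - f i| := abs_expect_le _ _
    _ ≤ δ := expect_le hs h

theorem abs_sum_mul_le_mul_sum_abs {ι α : Type*} [CommRing α] [LinearOrder α]
    [IsStrictOrderedRing α] {s : Finset ι} {w x : ι → α} {δ : α} (h : ∀ i ∈ s, |x i| ≤ δ) :
    |∑ i ∈ s, w i * x i| ≤ δ * ∑ i ∈ s, |w i| :=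
  calc |∑ i ∈ s, w i * x i| ≤ ∑ i ∈ s, |w i| * |x i| := by
        simpa only [abs_mul] using abs_sum_le_sum_abs (fun i => w i * x i) s
    _ ≤ ∑ i ∈ s, |w i| * δ := sum_le_sum fun i hi => by gcongr; exact h i hi
    _ = δ * ∑ i ∈ s, |w i| := by rw [← sum_mul, mul_comm]

theorem sum_sum_filter_div_card_mul {α β K : Type*} [Field K] [CharZero K]
    (s : Finset α) (t : Finset β) (R : α → β → Prop) [∀ a b, Decidable (R a b)]
    (w : α → K) (v : β → K) :
    ∑ k ∈ t, (∑ m ∈ s with R m k, w m / #{h ∈ t | R m h}) * v k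
      = ∑ m ∈ s, w m * 𝔼 k ∈ t with R m k, v k := by
  simp_rw [expect_eq_sum_div_card, sum_mul, sum_filter]
  rw [sum_comm]
  refine sum_congr rfl fun m _ => ?_
  rw [← sum_filter, ← sum_filter, ← mul_sum, div_mul_eq_mul_div, mul_div_assoc]

theorem gfn_encoder_perturbation_bound_general {X : Type*} [MetricSpace X] (Mo Mn : Finset X)
    (nnO nnN : X → X)
    (hN : ∀ i ∈ Mo, IsNN Mn i (nnN i))
    {L : ℕ} (We : Fin L → X → ℝ) (be : Fin L → ℝ)
    (σ : ℝ → ℝ) (C : ℝ) (hC : 0 ≤ C)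
    (hLip : ∀ a b, |σ a - σ b| ≤ C * |a - b|)
    (u : X → ℝ) (δ : ℝ)
    (hcross : ∀ i ∈ Mo, ∀ j ∈ Mn, (nnO j = i ∨ nnN i = j) → |u i - u j| ≤ δ) :
    ∀ i : Fin L,
      |σ (∑ j ∈ Mo, We i j * u j + be i) -
        σ (∑ k ∈ Mn,
            (∑ m ∈ Mo.filter (fun m => nnO k = m ∨ nnN m = k),
              We i m / ((Mn.filter (fun h => nnO h = m ∨ nnN m = h)).card : ℝ)) * u k
          + be i)| ≤ δ * C * ∑ j ∈ Mo, |We i j| := by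
  intro i
  rw [sum_sum_filter_div_card_mul Mo Mn (fun m k => nnO k = m ∨ nnN m = k)]
  have hnbhd : ∀ m ∈ Mo, (Mn.filter fun k => nnO k = m ∨ nnN m = k).Nonempty :=
    fun m hm => ⟨nnN m, mem_filter.mpr ⟨(hN m hm).1, Or.inr rfl⟩⟩
  calc _ ≤ C * |∑ j ∈ Mo, We i j * u j
          - ∑ m ∈ Mo, We i m * 𝔼 k ∈ Mn with nnO k = m ∨ nnN m = k, u k| :=
        (hLip _ _).trans_eq (by rw [add_sub_add_right_eq_sub])
    _ ≤ C * (δ * ∑ j ∈ Mo, |We i j|) := by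
        rw [← sum_sub_distrib]
        simp_rw [← mul_sub]
        gcongr
        refine abs_sum_mul_le_mul_sum_abs fun m hm => abs_sub_expect_le (hnbhd m hm) fun k hk => ?_
        rw [mem_filter] at hk
        exact hcross m hm k hk.1 hk.2
    _ = δ * C * ∑ j ∈ Mo, |We i j| := by ring

/-- Encoder perturbation bound: with a C-Lipschitz activation and nearest-neighbour
solution values within `δ`, the original and GFN-transformed encoder outputs differ
by at most `δ C Σ_j |We i j|` in each component. -/
theorem gfn_encoder_perturbation_bound {X : Type*} [MetricSpace X] (Mo Mn : Finset X)
    (nnO nnN : X → X)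
    (hO : ∀ j ∈ Mn, IsNN Mo j (nnO j))
    (hN : ∀ i ∈ Mo, IsNN Mn i (nnN i))
    {L : ℕ} (We : Fin L → X → ℝ) (be : Fin L → ℝ)
    (σ : ℝ → ℝ) (C : ℝ) (hC : 0 ≤ C)
    (hLip : ∀ a b, |σ a - σ b| ≤ C * |a - b|)
    (u : X → ℝ) (δ : ℝ) (hδ : 0 ≤ δ)
    (hcross : ∀ i ∈ Mo, ∀ j ∈ Mn, (nnO j = i ∨ nnN i = j) → |u i - u j| ≤ δ) :
    ∀ i : Fin L,
      |σ (∑ j ∈ Mo, We i j * u j + be i) -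
        σ (∑ k ∈ Mn,
            (∑ m ∈ Mo.filter (fun m => nnO k = m ∨ nnN m = k),
              We i m / ((Mn.filter (fun h => nnO h = m ∨ nnN m = h)).card : ℝ)) * u k
          + be i)| ≤ δ * C * ∑ j ∈ Mo, |We i j| :=
  gfn_encoder_perturbation_bound_general Mo Mn nnO nnN hN We be σ C hC hLip u δ hcross
end

section
/- (Autoencoder super- /sub-resolution bound, single layer) Assume: (i) |u(x_i) − u(x_j)| ≤ δ for all cross-nearest-neighbour pairs (i ∈ M_o, j ∈ M_n with i ← j or i → j); (ii) the autoencoder on M_o satisfies |u(x_k) − dec(enc(u|M_o))_k| ≤ β for all k ∈ M_o, where enc(v)_i = σ(Σ_j W^e_{i j} v_j + b^e_i) and dec(z)_k = Σ_j W^d_{k j} z_j + b^d_k; (iii) σ is C-Lipschitz. Then for every i ∈ M_n, |u(x_i) − d̃ec(ẽnc(u|M_n))_i| ≤ β + δ + δ C ‖W^d‖_∞ ‖W^e‖_∞, where ẽnc and d̃ec use the GFN-transformed weights W̃^e, W̃^d, b̃^d (W̃^e_{i k} = Σ_{m↮ k} W^e_{i m}/|{h: m↮ h}|, W̃^d_{i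 j} = mean_{k↮ i} W^d_{k j}, b̃^d_i = mean_{k↮ i} b^d_k) and ‖·‖_∞ denotes maximum absolute row sum. -/
open Finset
open scoped Classical

private lemma sum_filter_comm' {α β M : Type*} [AddCommMonoid M] (s : Finset α) (t : Finset β)
    (p : α → β → Prop) [∀ a b, Decidable (p a b)] (f : α → β → M) :
    ∑ a ∈ s, ∑ b ∈ t.filter (fun b => p a b), f a b
      = ∑ b ∈ t, ∑ a ∈ s.filter (fun a => p a b), f a b := by
  simp_rw [Finset.sum_filter]
  exact Finset.sum_comm

private lemma abs_mean_sub_le {α : Type*} (s : Finset α) (hs : s.Nonempty)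
    (g : α → ℝ) (x B : ℝ) (h : ∀ k ∈ s, |x - g k| ≤ B) :
    |x - (∑ k ∈ s, g k) / (s.card : ℝ)| ≤ B := by
  have hc : (0:ℝ) < s.card := by exact_mod_cast Finset.card_pos.mpr hs
  have hx : x - (∑ k ∈ s, g k) / (s.card : ℝ) = (∑ k ∈ s, (x - g k)) / (s.card : ℝ) := by
    rw [Finset.sum_sub_distrib, Finset.sum_const, nsmul_eq_mul, sub_div]
    congr 1
    exact (mul_div_cancel_left₀ x hc.ne').symm
  rw [hx, abs_div, abs_of_pos hc, div_le_iff₀ hc]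
  calc |∑ k ∈ s, (x - g k)| ≤ ∑ k ∈ s, |x - g k| := Finset.abs_sum_le_sum_abs _ _
    _ ≤ ∑ k ∈ s, B := Finset.sum_le_sum h
    _ = B * s.card := by rw [Finset.sum_const, nsmul_eq_mul, mul_comm]

/-- Autoencoder super- and sub-resolution bound (single layer): if nearest-neighbour
solution values are within `δ` and the autoencoder is `β`-accurate on `Mo`, then the
GFN-transformed autoencoder satisfies the bound `β + δ + δ C ‖Wd‖_∞ ‖We‖_∞` on `Mn`. -/
theorem gfn_autoencoder_bound {X : Type*} [MetricSpace X] (Mo Mn : Finset X)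
    (hMo : Mo.Nonempty)
    (nnO nnN : X → X)
    (hO : ∀ j ∈ Mn, IsNN Mo j (nnO j))
    (hN : ∀ i ∈ Mo, IsNN Mn i (nnN i))
    {L : ℕ} [NeZero L] (We : Fin L → X → ℝ) (be : Fin L → ℝ)
    (Wd : X → Fin L → ℝ) (bd : X → ℝ)
    (σ : ℝ → ℝ) (C : ℝ) (hC : 0 ≤ C)
    (hLip : ∀ a b, |σ a - σ b| ≤ C * |a - b|)
    (u : X → ℝ) (δ β : ℝ) (hδ : 0 ≤ δ) (hβ : 0 ≤ β)
    (hcross : ∀ i ∈ Mo, ∀ j ∈ Mn, (nnO j = i ∨ nnN i = j) → |u i - u j| ≤ δ)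
    (hauto : ∀ k ∈ Mo,
      |u k - (∑ l : Fin L, Wd k l * σ (∑ j ∈ Mo, We l j * u j + be l) + bd k)| ≤ β) :
    ∀ i ∈ Mn,
      |u i - (∑ l : Fin L,
          ((∑ k ∈ Mo.filter (fun k => nnO i = k ∨ nnN k = i), Wd k l) /
            ((Mo.filter (fun k => nnO i = k ∨ nnN k = i)).card : ℝ)) *
            σ (∑ k ∈ Mn,
                (∑ m ∈ Mo.filter (fun m => nnO k = m ∨ nnN m = k),
                  We l m / ((Mn.filter (fun h => nnO h = m ∨ nnN m = h)).card : ℝ)) * u k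
              + be l)
        + (∑ k ∈ Mo.filter (fun k => nnO i = k ∨ nnN k = i), bd k) /
            ((Mo.filter (fun k => nnO i = k ∨ nnN k = i)).card : ℝ))| ≤
      β + δ + δ * C *
        (Mo.sup' hMo fun k => ∑ l : Fin L, |Wd k l|) *
        (Finset.univ.sup' Finset.univ_nonempty fun l : Fin L => ∑ j ∈ Mo, |We l j|) := by
  classical
  set Bwd : ℝ := Mo.sup' hMo fun k => ∑ l : Fin L, |Wd k l| with hBwd
  set Bwe : ℝ := Finset.univ.sup' Finset.univ_nonempty fun l : Fin L => ∑ j ∈ Mo, |We l j|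
    with hBweDef
  have l0 : Fin L := ⟨0, Nat.pos_of_ne_zero (NeZero.ne L)⟩
  have hBwe0 : (0:ℝ) ≤ Bwe := by
    rw [hBweDef]
    exact le_trans (Finset.sum_nonneg fun j _ => abs_nonneg (We l0 j))
      (Finset.le_sup' (fun l : Fin L => ∑ j ∈ Mo, |We l j|) (Finset.mem_univ l0))
  -- mean of neighbouring values on Mn is δ-close to the value at m ∈ Mo
  have hTne : ∀ m ∈ Mo, (Mn.filter (fun h => nnO h = m ∨ nnN m = h)).Nonempty := fun m hm =>
    ⟨nnN m, Finset.mem_filter.mpr ⟨(hN m hm).1, Or.inr rfl⟩⟩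
  have hmean : ∀ m ∈ Mo,
      |u m - (∑ k ∈ Mn.filter (fun h => nnO h = m ∨ nnN m = h), u k) /
        ((Mn.filter (fun h => nnO h = m ∨ nnN m = h)).card : ℝ)| ≤ δ := by
    intro m hm
    refine abs_mean_sub_le _ (hTne m hm) u (u m) δ fun k hk => ?_
    obtain ⟨hkMn, hk'⟩ := Finset.mem_filter.mp hk
    exact hcross m hm k hkMn hk'
  -- encoder pre-activation perturbation bound
  have hkey : ∀ l : Fin L,
      |(∑ j ∈ Mo, We l j * u j + be l) -
        (∑ k ∈ Mn, (∑ m ∈ Mo.filter (fun m => nnO k = m ∨ nnN m = k),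
            We l m / ((Mn.filter (fun h => nnO h = m ∨ nnN m = h)).card : ℝ)) * u k
          + be l)| ≤ δ * Bwe := by
    intro l
    have hswap : ∑ k ∈ Mn, (∑ m ∈ Mo.filter (fun m => nnO k = m ∨ nnN m = k),
          We l m / ((Mn.filter (fun h => nnO h = m ∨ nnN m = h)).card : ℝ)) * u k
        = ∑ m ∈ Mo, We l m *
            ((∑ k ∈ Mn.filter (fun h => nnO h = m ∨ nnN m = h), u k) /
              ((Mn.filter (fun h => nnO h = m ∨ nnN m = h)).card : ℝ)) := by
      simp_rw [Finset.sum_mul]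
      rw [sum_filter_comm' Mn Mo (fun k m => nnO k = m ∨ nnN m = k)
        (fun k m => We l m / ((Mn.filter (fun h => nnO h = m ∨ nnN m = h)).card : ℝ) * u k)]
      refine Finset.sum_congr rfl fun m _ => ?_
      rw [← Finset.mul_sum, div_mul_eq_mul_div, mul_div_assoc]
    have hdiff : (∑ j ∈ Mo, We l j * u j + be l) -
        (∑ k ∈ Mn, (∑ m ∈ Mo.filter (fun m => nnO k = m ∨ nnN m = k),
            We l m / ((Mn.filter (fun h => nnO h = m ∨ nnN m = h)).card : ℝ)) * u k
          + be l)
        = ∑ m ∈ Mo, We l m *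
            (u m - (∑ k ∈ Mn.filter (fun h => nnO h = m ∨ nnN m = h), u k) /
              ((Mn.filter (fun h => nnO h = m ∨ nnN m = h)).card : ℝ)) := by
      rw [hswap, add_sub_add_right_eq_sub, ← Finset.sum_sub_distrib]
      exact Finset.sum_congr rfl fun m _ => (mul_sub _ _ _).symm
    rw [hdiff]
    calc |∑ m ∈ Mo, We l m *
            (u m - (∑ k ∈ Mn.filter (fun h => nnO h = m ∨ nnN m = h), u k) /
              ((Mn.filter (fun h => nnO h = m ∨ nnN m = h)).card : ℝ))|
        ≤ ∑ m ∈ Mo, |We l m *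
            (u m - (∑ k ∈ Mn.filter (fun h => nnO h = m ∨ nnN m = h), u k) /
              ((Mn.filter (fun h => nnO h = m ∨ nnN m = h)).card : ℝ))| :=
          Finset.abs_sum_le_sum_abs _ _
      _ ≤ ∑ m ∈ Mo, |We l m| * δ := by
          refine Finset.sum_le_sum fun m hm => ?_
          rw [abs_mul]
          exact mul_le_mul_of_nonneg_left (hmean m hm) (abs_nonneg _)
      _ = (∑ m ∈ Mo, |We l m|) * δ := by rw [← Finset.sum_mul]
      _ ≤ Bwe * δ := by
          refine mul_le_mul_of_nonneg_right ?_ hδ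
          rw [hBweDef]
          exact Finset.le_sup' (fun l : Fin L => ∑ j ∈ Mo, |We l j|) (Finset.mem_univ l)
      _ = δ * Bwe := mul_comm _ _
  intro i hi
  have hS : (Mo.filter (fun k => nnO i = k ∨ nnN k = i)).Nonempty :=
    ⟨nnO i, Finset.mem_filter.mpr ⟨(hO i hi).1, Or.inl rfl⟩⟩
  -- rewrite the decoder output as a mean
  have hD : (∑ l : Fin L,
          ((∑ k ∈ Mo.filter (fun k => nnO i = k ∨ nnN k = i), Wd k l) /
            ((Mo.filter (fun k => nnO i = k ∨ nnN k = i)).card : ℝ)) *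
            σ (∑ k ∈ Mn,
                (∑ m ∈ Mo.filter (fun m => nnO k = m ∨ nnN m = k),
                  We l m / ((Mn.filter (fun h => nnO h = m ∨ nnN m = h)).card : ℝ)) * u k
              + be l)
        + (∑ k ∈ Mo.filter (fun k => nnO i = k ∨ nnN k = i), bd k) /
            ((Mo.filter (fun k => nnO i = k ∨ nnN k = i)).card : ℝ))
      = (∑ k ∈ Mo.filter (fun k => nnO i = k ∨ nnN k = i),
          (∑ l : Fin L, Wd k l *
            σ (∑ k ∈ Mn,
                (∑ m ∈ Mo.filter (fun m => nnO k = m ∨ nnN m = k),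
                  We l m / ((Mn.filter (fun h => nnO h = m ∨ nnN m = h)).card : ℝ)) * u k
              + be l)
          + bd k)) /
          ((Mo.filter (fun k => nnO i = k ∨ nnN k = i)).card : ℝ) := by
    rw [Finset.sum_add_distrib, add_div]
    congr 1
    simp_rw [div_mul_eq_mul_div, Finset.sum_mul, ← Finset.sum_div]
    rw [Finset.sum_comm]
  rw [hD]
  refine abs_mean_sub_le _ hS _ _ _ fun k hk => ?_
  obtain ⟨hkMo, hkcond⟩ := Finset.mem_filter.mp hk
  have h1 : |u i - u k| ≤ δ := by
    rw [abs_sub_comm]; exact hcross k hkMo i hi hkcond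
  have h2 := hauto k hkMo
  have hnn : (0:ℝ) ≤ C * (δ * Bwe) := mul_nonneg hC (mul_nonneg hδ hBwe0)
  have h3 : |(∑ l : Fin L, Wd k l * σ (∑ j ∈ Mo, We l j * u j + be l) + bd k) -
      (∑ l : Fin L, Wd k l *
        σ (∑ k ∈ Mn,
            (∑ m ∈ Mo.filter (fun m => nnO k = m ∨ nnN m = k),
              We l m / ((Mn.filter (fun h => nnO h = m ∨ nnN m = h)).card : ℝ)) * u k
          + be l)
        + bd k)| ≤ Bwd * (C * (δ * Bwe)) := by
    rw [add_sub_add_right_eq_sub, ← Finset.sum_sub_distrib]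
    have hre : ∀ l : Fin L, Wd k l * σ (∑ j ∈ Mo, We l j * u j + be l) -
        Wd k l * σ (∑ k ∈ Mn,
            (∑ m ∈ Mo.filter (fun m => nnO k = m ∨ nnN m = k),
              We l m / ((Mn.filter (fun h => nnO h = m ∨ nnN m = h)).card : ℝ)) * u k
          + be l)
        = Wd k l * (σ (∑ j ∈ Mo, We l j * u j + be l) -
            σ (∑ k ∈ Mn,
                (∑ m ∈ Mo.filter (fun m => nnO k = m ∨ nnN m = k),
                  We l m / ((Mn.filter (fun h => nnO h = m ∨ nnN m = h)).card : ℝ)) * u k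
              + be l)) := fun l => (mul_sub _ _ _).symm
    calc |∑ l : Fin L, (Wd k l * σ (∑ j ∈ Mo, We l j * u j + be l) -
            Wd k l * σ (∑ k ∈ Mn,
                (∑ m ∈ Mo.filter (fun m => nnO k = m ∨ nnN m = k),
                  We l m / ((Mn.filter (fun h => nnO h = m ∨ nnN m = h)).card : ℝ)) * u k
              + be l))|
        ≤ ∑ l : Fin L, |Wd k l| * (C * (δ * Bwe)) := by
          refine le_trans (Finset.abs_sum_le_sum_abs _ _) (Finset.sum_le_sum fun l _ => ?_)
          rw [hre l, abs_mul]
          refine mul_le_mul_of_nonneg_left (le_trans (hLip _ _) ?_) (abs_nonneg _)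
          exact mul_le_mul_of_nonneg_left (hkey l) hC
      _ = (∑ l : Fin L, |Wd k l|) * (C * (δ * Bwe)) := by rw [← Finset.sum_mul]
      _ ≤ Bwd * (C * (δ * Bwe)) := by
          refine mul_le_mul_of_nonneg_right ?_ hnn
          rw [hBwd]
          exact Finset.le_sup' (fun k => ∑ l : Fin L, |Wd k l|) hkMo
  have heq : Bwd * (C * (δ * Bwe)) = δ * C * Bwd * Bwe := by ring
  calc |u i - (∑ l : Fin L, Wd k l *
          σ (∑ k ∈ Mn,
              (∑ m ∈ Mo.filter (fun m => nnO k = m ∨ nnN m = k),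
                We l m / ((Mn.filter (fun h => nnO h = m ∨ nnN m = h)).card : ℝ)) * u k
            + be l)
        + bd k)|
      ≤ |u i - u k| + |u k - (∑ l : Fin L, Wd k l * σ (∑ j ∈ Mo, We l j * u j + be l) + bd k)|
        + |(∑ l : Fin L, Wd k l * σ (∑ j ∈ Mo, We l j * u j + be l) + bd k) -
            (∑ l : Fin L, Wd k l *
              σ (∑ k ∈ Mn,
                  (∑ m ∈ Mo.filter (fun m => nnO k = m ∨ nnN m = k),
                    We l m / ((Mn.filter (fun h => nnO h = m ∨ nnN m = h)).card : ℝ)) * u k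
                + be l)
              + bd k)| := by
        have := abs_sub_le (u i) (u k)
          ((∑ l : Fin L, Wd k l *
            σ (∑ k ∈ Mn,
                (∑ m ∈ Mo.filter (fun m => nnO k = m ∨ nnN m = k),
                  We l m / ((Mn.filter (fun h => nnO h = m ∨ nnN m = h)).card : ℝ)) * u k
              + be l)
            + bd k))
        have h4 := abs_sub_le (u k)
          (∑ l : Fin L, Wd k l * σ (∑ j ∈ Mo, We l j * u j + be l) + bd k)
          ((∑ l : Fin L, Wd k l *
            σ (∑ k ∈ Mn,
                (∑ m ∈ Mo.filter (fun m => nnO k = m ∨ nnN m = k),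
                  We l m / ((Mn.filter (fun h => nnO h = m ∨ nnN m = h)).card : ℝ)) * u k
              + be l)
            + bd k))
        linarith
    _ ≤ β + δ + δ * C * Bwd * Bwe := by rw [← heq]; linarith
end

section
/- (Multi-layer mapper bound) Let the encoder consist of a first GFN layer with weights W^e ∈ ℝ^{L_1×N_o} followed by P standard layers with weight matrices W^{(1)},…,W^{(P)} and C-Lipschitz activation σ applied after each layer. Under the cross-mesh bound |u(x_i)−u(x_j)| ≤ δ for nearest-neighbour pairs and the mapper bound |map(μ)_i − enc^{M_o→M_o}(u|M_o)_i| ≤ α for all i, one has |map(μ)_i − enc^{M_o→M_n}(u|M_n)_i| ≤ α + δ C^{P+1} ‖W^e‖_∞ Π_{p=1}^P ‖W^{(p)}‖_∞ for all i. -/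
open Finset
open scoped Classical

/-- `stack σ n W b P v` applies `P` standard feedforward layers (weights `W p`,
biases `b p`, activation `σ` after each layer) to the first-layer output `v`. -/
def stack (σ : ℝ → ℝ) (n : ℕ → ℕ)
    (W : (p : ℕ) → Fin (n (p + 2)) → Fin (n (p + 1)) → ℝ)
    (b : (p : ℕ) → Fin (n (p + 2)) → ℝ) :
    (P : ℕ) → (Fin (n 1) → ℝ) → Fin (n (P + 1)) → ℝ
  | 0, v => v
  | P + 1, v => fun i => σ (∑ j, W P i j * stack σ n W b P v j + b P i)

/-! The GFN weights average each old-mesh weight over the new-mesh points linked to it, so the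
first layer on `Mn` equals the first layer on `Mo` with `u m` replaced by the average of `u` over
the points linked to `m`; every such point is within `δ` of `u m`. This first-layer error
`δ ‖We‖_∞` is then propagated through `P + 1` activations and `P` layers, each of which is
Lipschitz for the sup norm with constant `C ‖W^{(p)}‖_∞`. -/

lemma abs_sum_mul_le_sum_abs_mul {κ : Type*} (t : Finset κ) (a x : κ → ℝ) {D : ℝ}
    (hx : ∀ j ∈ t, |x j| ≤ D) :
    |∑ j ∈ t, a j * x j| ≤ (∑ j ∈ t, |a j|) * D :=
  calc |∑ j ∈ t, a j * x j| ≤ ∑ j ∈ t, |a j| * |x j| := by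
        simpa only [abs_mul] using Finset.abs_sum_le_sum_abs (fun j => a j * x j) t
    _ ≤ (∑ j ∈ t, |a j|) * D := by
        rw [Finset.sum_mul]
        exact Finset.sum_le_sum fun j hj => mul_le_mul_of_nonneg_left (hx j hj) (abs_nonneg _)

lemma abs_sub_average_le {κ : Type*} {t : Finset κ} (ht : t.Nonempty) {a δ : ℝ} {f : κ → ℝ}
    (hf : ∀ k ∈ t, |a - f k| ≤ δ) :
    |a - (∑ k ∈ t, f k) / t.card| ≤ δ := by
  have hcard : (0 : ℝ) < t.card := Nat.cast_pos.mpr ht.card_pos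
  have hsplit : a - (∑ k ∈ t, f k) / t.card = (∑ k ∈ t, (a - f k)) / t.card := by
    rw [Finset.sum_sub_distrib, Finset.sum_const, nsmul_eq_mul]
    field_simp
  rw [hsplit, abs_div, abs_of_pos hcard, div_le_iff₀ hcard]
  calc |∑ k ∈ t, (a - f k)| ≤ ∑ k ∈ t, |a - f k| := Finset.abs_sum_le_sum_abs _ _
    _ ≤ ∑ _k ∈ t, δ := Finset.sum_le_sum hf
    _ = δ * t.card := by rw [Finset.sum_const, nsmul_eq_mul, mul_comm]

section GFN

variable {X : Type*} (Mo Mn : Finset X) (nnO nnN : X → X)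

/-- The paper's `{h ∈ Mn : m ↮ h}`. -/
noncomputable def gfnLinked (m : X) : Finset X :=
  Mn.filter (fun h => nnO h = m ∨ nnN m = h)

/-- The paper's `W̃^e_{lk}` for the weight row `w = W^e_{l·}`. -/
noncomputable def gfnWeight (w : X → ℝ) (k : X) : ℝ :=
  ∑ m ∈ Mo.filter (fun m => nnO k = m ∨ nnN m = k), w m / (gfnLinked Mn nnO nnN m).card

lemma sum_gfnWeight_mul_eq (w u : X → ℝ) :
    ∑ k ∈ Mn, gfnWeight Mo Mn nnO nnN w k * u k =
      ∑ m ∈ Mo, w m * ((∑ k ∈ gfnLinked Mn nnO nnN m, u k) / (gfnLinked Mn nnO nnN m).card) := by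
  simp only [gfnWeight, gfnLinked, Finset.sum_mul, Finset.sum_filter]
  rw [Finset.sum_comm]
  refine Finset.sum_congr rfl fun m _ => ?_
  rw [Finset.sum_div, Finset.mul_sum]
  exact Finset.sum_congr rfl fun k _ => by split_ifs <;> ring

lemma abs_sum_mul_sub_sum_gfnWeight_mul_le (hN : ∀ m ∈ Mo, nnN m ∈ Mn) (w u : X → ℝ) {δ : ℝ}
    (hcross : ∀ i ∈ Mo, ∀ j ∈ Mn, (nnO j = i ∨ nnN i = j) → |u i - u j| ≤ δ) :
    |∑ m ∈ Mo, w m * u m - ∑ k ∈ Mn, gfnWeight Mo Mn nnO nnN w k * u k| ≤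
      (∑ m ∈ Mo, |w m|) * δ := by
  rw [sum_gfnWeight_mul_eq, ← Finset.sum_sub_distrib]
  simp only [← mul_sub]
  refine abs_sum_mul_le_sum_abs_mul Mo w _ fun m hm => abs_sub_average_le ?_ fun k hk => ?_
  · exact ⟨nnN m, Finset.mem_filter.mpr ⟨hN m hm, Or.inr rfl⟩⟩
  · obtain ⟨hkMn, hlink⟩ := Finset.mem_filter.mp hk
    exact hcross m hm k hkMn hlink

end GFN

section Stack

variable (σ : ℝ → ℝ) (n : ℕ → ℕ) (hn : ∀ p, 0 < n p)
  (W : (p : ℕ) → Fin (n (p + 2)) → Fin (n (p + 1)) → ℝ)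
  (b : (p : ℕ) → Fin (n (p + 2)) → ℝ)

lemma abs_stack_sub_stack_le {C : ℝ} (hC : 0 ≤ C) (hLip : ∀ a a', |σ a - σ a'| ≤ C * |a - a'|)
    {D : ℝ} (P : ℕ) {v v' : Fin (n 1) → ℝ} (hv : ∀ l, |v l - v' l| ≤ D)
    (i : Fin (n (P + 1))) :
    |stack σ n W b P v i - stack σ n W b P v' i| ≤
      D * ∏ p ∈ Finset.range P,
        (C * Finset.univ.sup'
          (Finset.univ_nonempty_iff.mpr (Fin.pos_iff_nonempty.mp (hn (p + 2))))
          (fun i' => ∑ j, |W p i' j|)) := by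
  induction P with
  | zero => simpa [stack] using hv i
  | succ P ih =>
    set B := D * ∏ p ∈ Finset.range P,
        (C * Finset.univ.sup'
          (Finset.univ_nonempty_iff.mpr (Fin.pos_iff_nonempty.mp (hn (p + 2))))
          (fun i' => ∑ j, |W p i' j|))
    have hB : 0 ≤ B := by
      obtain ⟨j⟩ := Fin.pos_iff_nonempty.mp (hn (P + 1))
      exact (abs_nonneg _).trans (ih j)
    have hrow : ∑ j, |W P i j| ≤ Finset.univ.sup'
        (Finset.univ_nonempty_iff.mpr (Fin.pos_iff_nonempty.mp (hn (P + 2))))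
        (fun i' => ∑ j, |W P i' j|) :=
      Finset.le_sup' (fun i' => ∑ j, |W P i' j|) (Finset.mem_univ i)
    calc |stack σ n W b (P + 1) v i - stack σ n W b (P + 1) v' i|
        ≤ C * |∑ j, W P i j * (stack σ n W b P v j - stack σ n W b P v' j)| := by
          refine (hLip _ _).trans_eq ?_
          simp only [mul_sub, Finset.sum_sub_distrib, add_sub_add_right_eq_sub]
      _ ≤ C * ((∑ j, |W P i j|) * B) :=
          mul_le_mul_of_nonneg_left
            (abs_sum_mul_le_sum_abs_mul _ _ _ fun j _ => ih j) hC
      _ ≤ D * ∏ p ∈ Finset.range (P + 1),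
          (C * Finset.univ.sup'
            (Finset.univ_nonempty_iff.mpr (Fin.pos_iff_nonempty.mp (hn (p + 2))))
            (fun i' => ∑ j, |W p i' j|)) := by
          rw [Finset.prod_range_succ, ← mul_assoc]
          nlinarith [mul_le_mul_of_nonneg_right hrow hB]

end Stack

theorem gfn_multilayer_mapper_bound_general {X : Type*} [MetricSpace X] (Mo Mn : Finset X)
    (nnO nnN : X → X)
    (hN : ∀ i ∈ Mo, IsNN Mn i (nnN i))
    (n : ℕ → ℕ) (hn : ∀ p, 0 < n p) (P : ℕ)
    (We : Fin (n 1) → X → ℝ) (be : Fin (n 1) → ℝ)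
    (W : (p : ℕ) → Fin (n (p + 2)) → Fin (n (p + 1)) → ℝ)
    (b : (p : ℕ) → Fin (n (p + 2)) → ℝ)
    (σ : ℝ → ℝ) (C : ℝ) (hC : 0 ≤ C)
    (hLip : ∀ a a', |σ a - σ a'| ≤ C * |a - a'|)
    (u : X → ℝ) (δ α : ℝ) (hδ : 0 ≤ δ)
    (hcross : ∀ i ∈ Mo, ∀ j ∈ Mn, (nnO j = i ∨ nnN i = j) → |u i - u j| ≤ δ)
    (mapμ : Fin (n (P + 1)) → ℝ)
    (hmap : ∀ i, |mapμ i -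
      stack σ n W b P (fun l => σ (∑ j ∈ Mo, We l j * u j + be l)) i| ≤ α) :
    ∀ i, |mapμ i -
      stack σ n W b P (fun l => σ (∑ k ∈ Mn,
        (∑ m ∈ Mo.filter (fun m => nnO k = m ∨ nnN m = k),
          We l m / ((Mn.filter (fun h => nnO h = m ∨ nnN m = h)).card : ℝ)) * u k
        + be l)) i| ≤
      α + δ * C ^ (P + 1) *
        (Finset.univ.sup'
            (Finset.univ_nonempty_iff.mpr (Fin.pos_iff_nonempty.mp (hn 1)))
            fun l => ∑ j ∈ Mo, |We l j|) *
        ∏ p ∈ Finset.range P,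
          Finset.univ.sup'
            (Finset.univ_nonempty_iff.mpr (Fin.pos_iff_nonempty.mp (hn (p + 2))))
            (fun i' => ∑ j, |W p i' j|) := by
  intro i
  set A := Finset.univ.sup' (Finset.univ_nonempty_iff.mpr (Fin.pos_iff_nonempty.mp (hn 1)))
    fun l => ∑ j ∈ Mo, |We l j|
  have hfirst : ∀ l, |σ (∑ j ∈ Mo, We l j * u j + be l) -
      σ (∑ k ∈ Mn, gfnWeight Mo Mn nnO nnN (We l) k * u k + be l)| ≤ C * (δ * A) := by
    intro l
    refine (hLip _ _).trans (mul_le_mul_of_nonneg_left ?_ hC)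
    rw [add_sub_add_right_eq_sub, mul_comm δ]
    exact (abs_sum_mul_sub_sum_gfnWeight_mul_le Mo Mn nnO nnN (fun m hm => (hN m hm).1) (We l) u
      hcross).trans (mul_le_mul_of_nonneg_right
        (Finset.le_sup' (fun l => ∑ j ∈ Mo, |We l j|) (Finset.mem_univ l)) hδ)
  calc _ ≤ _ := abs_sub_le _ _ _
    _ ≤ _ := add_le_add (hmap i)
      (abs_stack_sub_stack_le σ n hn W b hC hLip P hfirst i)
    _ = _ := by
      rw [Finset.prod_mul_distrib, Finset.prod_const, Finset.card_range]
      ring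

/-- Multi-layer mapper bound: with a GFN first layer followed by `P` standard
C-Lipschitz layers, an `α`-accurate mapper on `Mo` is
`(α + δ C^{P+1} ‖We‖_∞ Π_p ‖W^{(p)}‖_∞)`-accurate against the transformed encoder
on `Mn`. -/
theorem gfn_multilayer_mapper_bound {X : Type*} [MetricSpace X] (Mo Mn : Finset X)
    (nnO nnN : X → X)
    (hO : ∀ j ∈ Mn, IsNN Mo j (nnO j))
    (hN : ∀ i ∈ Mo, IsNN Mn i (nnN i))
    (n : ℕ → ℕ) (hn : ∀ p, 0 < n p) (P : ℕ)
    (We : Fin (n 1) → X → ℝ) (be : Fin (n 1) → ℝ)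
    (W : (p : ℕ) → Fin (n (p + 2)) → Fin (n (p + 1)) → ℝ)
    (b : (p : ℕ) → Fin (n (p + 2)) → ℝ)
    (σ : ℝ → ℝ) (C : ℝ) (hC : 0 ≤ C)
    (hLip : ∀ a a', |σ a - σ a'| ≤ C * |a - a'|)
    (u : X → ℝ) (δ α : ℝ) (hδ : 0 ≤ δ) (hα : 0 ≤ α)
    (hcross : ∀ i ∈ Mo, ∀ j ∈ Mn, (nnO j = i ∨ nnN i = j) → |u i - u j| ≤ δ)
    (mapμ : Fin (n (P + 1)) → ℝ)
    (hmap : ∀ i, |mapμ i -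
      stack σ n W b P (fun l => σ (∑ j ∈ Mo, We l j * u j + be l)) i| ≤ α) :
    ∀ i, |mapμ i -
      stack σ n W b P (fun l => σ (∑ k ∈ Mn,
        (∑ m ∈ Mo.filter (fun m => nnO k = m ∨ nnN m = k),
          We l m / ((Mn.filter (fun h => nnO h = m ∨ nnN m = h)).card : ℝ)) * u k
        + be l)) i| ≤
      α + δ * C ^ (P + 1) *
        (Finset.univ.sup'
            (Finset.univ_nonempty_iff.mpr (Fin.pos_iff_nonempty.mp (hn 1)))
            fun l => ∑ j ∈ Mo, |We l j|) *
        ∏ p ∈ Finset.range P,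
          Finset.univ.sup'
            (Finset.univ_nonempty_iff.mpr (Fin.pos_iff_nonempty.mp (hn (p + 2))))
            (fun i' => ∑ j, |W p i' j|) :=
  gfn_multilayer_mapper_bound_general Mo Mn nnO nnN hN n hn P We be W b σ C hC hLip u δ α hδ hcross
    mapμ hmap
end
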